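/- arXiv:1708.02281 — 2 statements merged into one kernel-verified Lean document; each statement's English description precedes it below -/
import Mathlib

section
/- For every r ≥ 0 and every unit vector u = (u₁,u₂) ∈ ℝ², one has ∫_{-π}^{π} cos t · exp(i r (u₁ cos t + u₂ sin t)) dt = 2πi u₁ J₁(r). -/
open Real MeasureTheory

/-! Write `u = (cos φ, sin φ)`. By `2π`-periodicity the substitution `t ↦ t + φ` turns the phase
`u₁ cos t + u₂ sin t = cos (t - φ)` into `cos t` and the factor `cos t` into
`u₁ cos t - u₂ sin t`. The sine part vanishes by oddness. For the cosine part, expand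
`exp (i r cos t)` and integrate term by term: by Wallis' formula the even powers of `cos` give
exactly the series of `J₁(r)`, while the odd ones integrate to zero over a full period. -/

noncomputable def besselJ (n : ℕ) (t : ℝ) : ℝ :=
  ∑' m : ℕ, ((-1 : ℝ) ^ m / (Nat.factorial m * Nat.factorial (m + n))) * (t / 2) ^ (2 * m + n)

theorem hasSum_besselJ (n : ℕ) (t : ℝ) :
    HasSum (fun m : ℕ => (-1 : ℝ) ^ m / (m.factorial * (m + n).factorial) * (t / 2) ^ (2 * m + n))
      (besselJ n t) := by
  refine Summable.hasSum <| Summable.of_norm_bounded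
    ((Real.summable_pow_div_factorial ((t / 2) ^ 2)).mul_left (|t / 2| ^ n)) fun m => ?_
  have hfac : (1 : ℝ) ≤ (m + n).factorial := by exact_mod_cast (m + n).factorial_pos
  calc ‖(-1 : ℝ) ^ m / (m.factorial * (m + n).factorial) * (t / 2) ^ (2 * m + n)‖
      = |t / 2| ^ n * ((t / 2) ^ 2) ^ m / (m.factorial * (m + n).factorial) := by
        rw [norm_mul, norm_div, norm_pow, norm_pow, norm_neg, norm_one, one_pow, pow_add, pow_mul,
          Real.norm_eq_abs (t / 2), sq_abs, norm_mul, Real.norm_natCast, Real.norm_natCast]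
        ring
    _ ≤ |t / 2| ^ n * ((t / 2) ^ 2) ^ m / (m.factorial * 1) := by gcongr
    _ = |t / 2| ^ n * (((t / 2) ^ 2) ^ m / m.factorial) := by rw [mul_one, mul_div_assoc]

theorem intervalIntegral_eq_zero_of_odd {E : Type*} [NormedAddCommGroup E] [NormedSpace ℝ E]
    {f : ℝ → E} (hf : ∀ x, f (-x) = -f x) (a : ℝ) : ∫ x in -a..a, f x = 0 := by
  have h := intervalIntegral.integral_comp_neg (a := -a) (b := a) f
  simp only [hf, intervalIntegral.integral_neg, neg_neg] at h
  have h2 : (2 : ℝ) • ∫ x in -a..a, f x = 0 := by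
    rw [two_smul]
    nth_rewrite 1 [← h]
    exact neg_add_cancel _
  exact (smul_eq_zero.mp h2).resolve_left two_ne_zero

theorem integral_cos_pow_add_two_neg_pi_pi (n : ℕ) :
    ∫ x in -π..π, cos x ^ (n + 2) = (n + 1) / (n + 2) * ∫ x in -π..π, cos x ^ n := by
  simp [integral_cos_pow]

theorem integral_cos_pow_two_mul_add_one (m : ℕ) : ∫ x in -π..π, cos x ^ (2 * m + 1) = 0 := by
  induction m with
  | zero => simp
  | succ k ih =>
    rw [show 2 * (k + 1) + 1 = 2 * k + 1 + 2 by ring, integral_cos_pow_add_two_neg_pi_pi, ih,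
      mul_zero]

theorem integral_cos_pow_two_mul (m : ℕ) :
    ∫ x in -π..π, cos x ^ (2 * m) =
      2 * π * (2 * m).factorial / ((m.factorial : ℝ) ^ 2 * 4 ^ m) := by
  induction m with
  | zero => simp; ring
  | succ k ih =>
    rw [show 2 * (k + 1) = 2 * k + 2 by ring, integral_cos_pow_add_two_neg_pi_pi, ih,
      show 2 * k + 2 = (2 * k + 1) + 1 by ring, Nat.factorial_succ, Nat.factorial_succ,
      Nat.factorial_succ]
    push_cast
    field_simp
    ring

theorem hasSum_integral_cos_mul_exp_I_mul_cos (a b r : ℝ) :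
    HasSum
      (fun k : ℕ => (Complex.I * r) ^ k / k.factorial * ((∫ t in a..b, cos t ^ (k + 1) : ℝ) : ℂ))
      (∫ t in a..b, (cos t : ℂ) * Complex.exp (Complex.I * r * cos t)) := by
  have hbound : ∀ (k : ℕ) (t : ℝ),
      ‖(cos t : ℂ) * ((Complex.I * r * cos t) ^ k / k.factorial)‖ ≤ |r| ^ k / k.factorial := by
    intro k t
    have hcos : ‖(cos t : ℂ)‖ ≤ 1 := by
      rw [Complex.norm_real, Real.norm_eq_abs]
      exact abs_cos_le_one t
    have hphase : ‖Complex.I * r * cos t‖ ≤ |r| := by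
      rw [norm_mul, norm_mul, Complex.norm_I, one_mul, Complex.norm_real, Complex.norm_real,
        Real.norm_eq_abs, Real.norm_eq_abs]
      exact mul_le_of_le_one_right (abs_nonneg r) (abs_cos_le_one t)
    rw [norm_mul, norm_div, norm_pow, Complex.norm_natCast]
    calc _ ≤ 1 * (|r| ^ k / k.factorial) := by gcongr
      _ = _ := one_mul _
  have hexp : ∀ t : ℝ, HasSum (fun k => (cos t : ℂ) * ((Complex.I * r * cos t) ^ k / k.factorial))
      ((cos t : ℂ) * Complex.exp (Complex.I * r * cos t)) := fun t => by
    rw [Complex.exp_eq_exp_ℂ]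
    exact (NormedSpace.expSeries_div_hasSum_exp (Complex.I * r * cos t)).mul_left _
  have hseries : HasSum
      (fun k => ∫ t in a..b, (cos t : ℂ) * ((Complex.I * r * cos t) ^ k / k.factorial))
      (∫ t in a..b, (cos t : ℂ) * Complex.exp (Complex.I * r * cos t)) :=
    intervalIntegral.hasSum_integral_of_dominated_convergence (fun k _ => |r| ^ k / k.factorial)
      (fun k => (Continuous.aestronglyMeasurable (by fun_prop)))
      (fun k => .of_forall fun t _ => hbound k t)
      (.of_forall fun _ _ => Real.summable_pow_div_factorial |r|)
      intervalIntegrable_const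
      (.of_forall fun t _ => hexp t)
  have hterm : ∀ k : ℕ, ∫ t in a..b, (cos t : ℂ) * ((Complex.I * r * cos t) ^ k / k.factorial) =
      (Complex.I * r) ^ k / k.factorial * ((∫ t in a..b, cos t ^ (k + 1) : ℝ) : ℂ) := fun k => by
    rw [← intervalIntegral.integral_ofReal, ← intervalIntegral.integral_const_mul]
    congr 1 with t
    push_cast
    ring
  simpa only [hterm] using hseries

theorem integral_cos_mul_exp_I_mul_cos (r : ℝ) :
    ∫ t in -π..π, (cos t : ℂ) * Complex.exp (Complex.I * r * cos t) =
      2 * π * Complex.I * besselJ 1 r := by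
  set c : ℕ → ℂ := fun k =>
    (Complex.I * r) ^ k / k.factorial * ((∫ t in -π..π, cos t ^ (k + 1) : ℝ) : ℂ)
  have heven : ∀ m, c (2 * m) = 0 := fun m => by
    simp only [c, integral_cos_pow_two_mul_add_one, Complex.ofReal_zero, mul_zero]
  have hodd : ∀ m, c (2 * m + 1) = 2 * π * Complex.I *
      (((-1 : ℝ) ^ m / (m.factorial * (m + 1).factorial) * (r / 2) ^ (2 * m + 1) : ℝ) : ℂ) := by
    intro m
    have hI : (Complex.I * r) ^ (2 * m + 1) = Complex.I * ((-1 : ℝ) ^ m * r ^ (2 * m + 1) : ℝ) := by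
      rw [mul_pow, pow_succ, pow_mul, Complex.I_sq]
      push_cast
      ring
    simp only [c]
    rw [show 2 * m + 1 + 1 = 2 * (m + 1) by ring, integral_cos_pow_two_mul, hI,
      show 2 * (m + 1) = (2 * m + 1) + 1 by ring, Nat.factorial_succ (2 * m + 1),
      Nat.factorial_succ m]
    have h4 : (4 : ℂ) ^ (m + 1) = 2 ^ (2 * m + 1) * 2 := by
      rw [show (4 : ℂ) = 2 ^ 2 by norm_num, ← pow_mul]
      ring
    have hfac : ((2 * m + 1).factorial : ℂ) ≠ 0 := by exact_mod_cast (2 * m + 1).factorial_ne_zero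
    push_cast
    rw [div_pow, h4]
    field_simp
    ring
  have hsum : HasSum c (0 + 2 * π * Complex.I * besselJ 1 r) := by
    refine HasSum.even_add_odd ?_ ?_
    · simpa only [heven] using hasSum_zero
    · simpa only [hodd] using (Complex.hasSum_ofReal.mpr (hasSum_besselJ 1 r)).mul_left _
  rw [zero_add] at hsum
  exact (hasSum_integral_cos_mul_exp_I_mul_cos (-π) π r).unique hsum

theorem integral_sin_mul_exp_I_mul_cos (r : ℝ) :
    ∫ t in -π..π, (sin t : ℂ) * Complex.exp (Complex.I * r * cos t) = 0 :=
  intervalIntegral_eq_zero_of_odd (fun t => by rw [sin_neg, cos_neg]; push_cast; ring) π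

theorem integral_cos_mul_exp_I_mul_cos_sub (r φ : ℝ) :
    ∫ t in -π..π, (cos t : ℂ) * Complex.exp (Complex.I * r * cos (t - φ)) =
      2 * π * Complex.I * cos φ * besselJ 1 r := by
  set F : ℝ → ℂ := fun t => (cos t : ℂ) * Complex.exp (Complex.I * r * cos (t - φ))
  have hper : Function.Periodic F (2 * π) := fun t => by
    simp only [F, cos_add_two_pi, show t + 2 * π - φ = t - φ + 2 * π by ring]
  have hshift : ∫ t in -π..π, F t = ∫ t in -π..π, F (t + φ) := by
    rw [intervalIntegral.integral_comp_add_right, show π + φ = -π + φ + 2 * π by ring,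
      ← hper.intervalIntegral_add_eq (-π) (-π + φ), show -π + 2 * π = π by ring]
  have hrot : ∀ t, F (t + φ) = (cos φ : ℂ) * ((cos t : ℂ) * Complex.exp (Complex.I * r * cos t)) -
      (sin φ : ℂ) * ((sin t : ℂ) * Complex.exp (Complex.I * r * cos t)) := fun t => by
    simp only [F, add_sub_cancel_right, cos_add]
    push_cast
    ring
  rw [hshift, funext hrot, intervalIntegral.integral_sub
    ((by fun_prop : Continuous _).intervalIntegrable _ _)
    ((by fun_prop : Continuous _).intervalIntegrable _ _),
    intervalIntegral.integral_const_mul, intervalIntegral.integral_const_mul,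
    integral_cos_mul_exp_I_mul_cos, integral_sin_mul_exp_I_mul_cos]
  ring

theorem exists_cos_sin_eq_of_sq_add_sq_eq_one {x y : ℝ} (h : x ^ 2 + y ^ 2 = 1) :
    ∃ φ : ℝ, cos φ = x ∧ sin φ = y := by
  set z : ℂ := ⟨x, y⟩
  have hz : ‖z‖ = 1 := by
    rw [← pow_eq_one_iff_of_nonneg (norm_nonneg z) two_ne_zero, Complex.sq_norm,
      Complex.normSq_mk, ← h]
    ring
  refine ⟨z.arg, ?_, ?_⟩
  · simpa [hz] using Complex.norm_mul_cos_arg z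
  · simpa [hz] using Complex.norm_mul_sin_arg z

theorem circle_integral_cos_exp_eq_besselJ_one_general (r : ℝ) (u₁ u₂ : ℝ)
    (hu : u₁ ^ 2 + u₂ ^ 2 = 1) :
    ∫ t in (-Real.pi)..Real.pi,
        ((Real.cos t : ℝ) : ℂ) *
          Complex.exp (Complex.I * (r : ℂ) *
            ((u₁ * Real.cos t + u₂ * Real.sin t : ℝ) : ℂ)) =
      2 * (Real.pi : ℂ) * Complex.I * (u₁ : ℂ) * ((besselJ 1 r : ℝ) : ℂ) := by
  obtain ⟨φ, rfl, rfl⟩ := exists_cos_sin_eq_of_sq_add_sq_eq_one hu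
  have hphase : ∀ t, cos φ * cos t + sin φ * sin t = cos (t - φ) := fun t => by
    rw [cos_sub]
    ring
  simp only [hphase]
  exact integral_cos_mul_exp_I_mul_cos_sub r φ

/-- For every `r ≥ 0` and every unit vector `(u₁, u₂) ∈ ℝ²`,
`∫_{-π}^{π} cos t · exp(i r (u₁ cos t + u₂ sin t)) dt = 2πi u₁ J₁(r)`. -/
theorem circle_integral_cos_exp_eq_besselJ_one (r : ℝ) (hr : 0 ≤ r) (u₁ u₂ : ℝ)
    (hu : u₁ ^ 2 + u₂ ^ 2 = 1) :
    ∫ t in (-Real.pi)..Real.pi,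
        ((Real.cos t : ℝ) : ℂ) *
          Complex.exp (Complex.I * (r : ℂ) *
            ((u₁ * Real.cos t + u₂ * Real.sin t : ℝ) : ℂ)) =
      2 * (Real.pi : ℂ) * Complex.I * (u₁ : ℂ) * ((besselJ 1 r : ℝ) : ℂ) :=
  circle_integral_cos_exp_eq_besselJ_one_general r u₁ u₂ hu
end

section
/- Fix E > 0. The covariance function r^E(u) := J₀(2π√E ‖u‖) is twice differentiable at every nonzero u = (u₁,u₂) ∈ ℝ², and its pure second partial derivative satisfies ∂²r^E/∂u₁²(u) = −2π²E ( J₀(2π√E ‖u‖) + (1 − 2u₁²/‖u‖²) J₂(2π√E ‖u‖) ) (and analogously with the index 2 replacing 1). -/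
/-!
Write `J_n(t) = (t/2)^n F_n(t²)`, where `F_n = besselSeries n` is an entire power series.
Termwise differentiation gives `F_n' = -F_{n+1}/4`, and the kernel is the radial function
`u ↦ F₀(c² ‖u‖²)` with `c = 2π√E`, so the chain rule for `u ↦ g(‖u‖²)` expresses its second
partials through `F₁` and `F₂`. The Bessel recurrence `J₀ + J₂ = (2/t) J₁`, i.e.
`F₁ = F₀ + (x/4) F₂`, turns this into the stated combination of `J₀` and `J₂`.
-/

open Real MeasureTheory

/-- The covariance kernel `r^E(u) = J₀(2π√E ‖u‖)` of Berry's random wave model. -/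
noncomputable def covKernel (E : ℝ) (u : EuclideanSpace ℝ (Fin 2)) : ℝ :=
  besselJ 0 (2 * Real.pi * Real.sqrt E * ‖u‖)

/-- First partial derivative of `covKernel E` in direction `i`. -/
noncomputable def covKernelPartial (E : ℝ) (i : Fin 2) (u : EuclideanSpace ℝ (Fin 2)) : ℝ :=
  fderiv ℝ (covKernel E) u (EuclideanSpace.single i 1)

open scoped Nat

theorem hasDerivAt_tsum_mul_pow {𝕜 : Type*} [RCLike 𝕜] {b : ℕ → 𝕜}
    (hb : ∀ R : ℝ, Summable fun m => ‖b m‖ * R ^ m) (x : 𝕜) :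
    HasDerivAt (fun y => ∑' m, b m * y ^ m) (∑' m, (m + 1) * b (m + 1) * x ^ m) x := by
  set R := ‖x‖ + 1
  have hR : 1 ≤ R := le_add_of_nonneg_left (norm_nonneg x)
  have hx : x ∈ Metric.ball (0 : 𝕜) R := by simp [R]
  -- `n ≤ 2 ^ n` turns the termwise derivatives into a series dominated by `hb (2 * R)`.
  have hbound : ∀ n (y : 𝕜), y ∈ Metric.ball 0 R →
      ‖b n * (n * y ^ (n - 1))‖ ≤ ‖b n‖ * (2 * R) ^ n := by
    intro n y hy
    rw [mem_ball_zero_iff] at hy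
    calc ‖b n * (n * y ^ (n - 1))‖ = ‖b n‖ * (n * ‖y‖ ^ (n - 1)) := by simp
      _ ≤ ‖b n‖ * (2 ^ n * R ^ n) := by
        gcongr
        · exact_mod_cast n.lt_two_pow_self.le
        · exact (pow_le_pow_left₀ (norm_nonneg y) hy.le _).trans
            (pow_le_pow_right₀ hR (n.sub_le 1))
      _ = ‖b n‖ * (2 * R) ^ n := by rw [mul_pow]
  have hderiv := hasDerivAt_tsum_of_isPreconnected (hb (2 * R)) Metric.isOpen_ball
    (convex_ball 0 R).isPreconnected (fun n y _ => (hasDerivAt_pow n y).const_mul (b n))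
    hbound hx (Summable.of_norm (by simpa using hb ‖x‖)) hx
  rw [(Summable.of_norm_bounded (hb (2 * R)) (hbound · x hx)).tsum_eq_zero_add] at hderiv
  simpa [mul_comm, mul_left_comm, mul_assoc] using hderiv

noncomputable def besselCoeff (n m : ℕ) : ℝ := (-1) ^ m / (m ! * (m + n)! * 4 ^ m)

noncomputable def besselSeries (n : ℕ) (x : ℝ) : ℝ := ∑' m, besselCoeff n m * x ^ m

theorem besselJ_eq_mul_besselSeries (n : ℕ) (t : ℝ) :
    besselJ n t = (t / 2) ^ n * besselSeries n (t ^ 2) := by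
  rw [besselJ, besselSeries, ← tsum_mul_left]
  refine tsum_congr fun m => ?_
  have : (m ! : ℝ) * (m + n)! ≠ 0 := by positivity
  rw [besselCoeff, pow_add, pow_mul, div_pow t 2 2, div_pow (t ^ 2)]
  norm_num
  field_simp

theorem besselJ_zero_eq_besselSeries (t : ℝ) : besselJ 0 t = besselSeries 0 (t ^ 2) := by
  rw [besselJ_eq_mul_besselSeries, pow_zero, one_mul]

theorem abs_besselCoeff_le (n m : ℕ) : |besselCoeff n m| ≤ (m ! : ℝ)⁻¹ := by
  rw [besselCoeff, abs_div, abs_pow, abs_neg, abs_one, one_pow, abs_of_pos (by positivity),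
    one_div, mul_assoc]
  refine inv_anti₀ (by positivity) (le_mul_of_one_le_right (by positivity) ?_)
  exact one_le_mul_of_one_le_of_one_le (mod_cast (m + n).factorial_pos) (one_le_pow₀ (by norm_num))

theorem summable_norm_besselCoeff_mul_pow (n : ℕ) (R : ℝ) :
    Summable fun m => ‖besselCoeff n m‖ * R ^ m := by
  refine (Real.summable_pow_div_factorial |R|).of_norm_bounded fun m => ?_
  rw [norm_mul, norm_pow, Real.norm_eq_abs, Real.norm_eq_abs, abs_abs, div_eq_inv_mul]
  exact mul_le_mul_of_nonneg_right (abs_besselCoeff_le n m) (by positivity)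

theorem summable_besselCoeff_mul_pow (n : ℕ) (x : ℝ) :
    Summable fun m => besselCoeff n m * x ^ m :=
  .of_norm (by simpa using summable_norm_besselCoeff_mul_pow n ‖x‖)

theorem succ_mul_besselCoeff_succ (n m : ℕ) :
    (m + 1 : ℝ) * besselCoeff n (m + 1) = -besselCoeff (n + 1) m / 4 := by
  rw [besselCoeff, besselCoeff, show m + 1 + n = m + n + 1 by omega,
    show m + (n + 1) = m + n + 1 by omega, Nat.factorial_succ m]
  push_cast
  field_simp
  ring

theorem hasDerivAt_besselSeries (n : ℕ) (x : ℝ) :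
    HasDerivAt (besselSeries n) (-besselSeries (n + 1) x / 4) x := by
  have h := hasDerivAt_tsum_mul_pow (summable_norm_besselCoeff_mul_pow n) x
  simp only [succ_mul_besselCoeff_succ, neg_mul, tsum_neg, div_mul_eq_mul_div,
    tsum_div_const] at h
  exact h

theorem succ_mul_besselSeries_succ (n : ℕ) (x : ℝ) :
    (n + 1) * besselSeries (n + 1) x = besselSeries n x + x / 4 * besselSeries (n + 2) x := by
  rw [← sub_eq_iff_eq_add']
  have hcoeff : ∀ m : ℕ, (n + 1) * besselCoeff (n + 1) (m + 1) - besselCoeff n (m + 1)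
      = besselCoeff (n + 2) m / 4 := by
    intro m
    rw [besselCoeff, besselCoeff, besselCoeff, show m + 1 + (n + 1) = m + n + 1 + 1 by omega,
      show m + 1 + n = m + n + 1 by omega, show m + (n + 2) = m + n + 1 + 1 by omega]
    simp only [Nat.factorial_succ]
    push_cast
    field_simp
    ring
  have hzero : (n + 1) * besselCoeff (n + 1) 0 - besselCoeff n 0 = 0 := by
    rw [besselCoeff, besselCoeff, zero_add, zero_add, Nat.factorial_succ]
    push_cast
    field_simp
    ring
  have h₁ := (summable_besselCoeff_mul_pow (n + 1) x).mul_left ((n : ℝ) + 1)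
  have h₀ := summable_besselCoeff_mul_pow n x
  have hsub : Summable fun m => ((n + 1) * besselCoeff (n + 1) m - besselCoeff n m) * x ^ m := by
    simpa only [sub_mul, mul_assoc] using h₁.sub h₀
  calc (n + 1) * besselSeries (n + 1) x - besselSeries n x
      = ∑' m, ((n + 1) * besselCoeff (n + 1) m - besselCoeff n m) * x ^ m := by
        rw [besselSeries, besselSeries, ← tsum_mul_left, ← h₁.tsum_sub h₀]
        exact tsum_congr fun m => by ring
    _ = x / 4 * besselSeries (n + 2) x := by
        rw [hsub.tsum_eq_zero_add, hzero, zero_mul, zero_add, besselSeries, ← tsum_mul_left]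
        refine tsum_congr fun m => ?_
        rw [hcoeff, pow_succ]
        ring

theorem hasDerivAt_besselSeries_const_mul (n : ℕ) (a y : ℝ) :
    HasDerivAt (fun y => besselSeries n (a * y)) (-(a / 4) * besselSeries (n + 1) (a * y)) y := by
  refine ((hasDerivAt_besselSeries n (a * y)).comp y ((hasDerivAt_id y).const_mul a)).congr_deriv
    ?_
  ring

section Radial

open scoped RealInnerProductSpace

variable {F : Type*} [NormedAddCommGroup F] [InnerProductSpace ℝ F] {g g' : ℝ → ℝ}

theorem hasFDerivAt_comp_norm_sq {d : ℝ} {u : F} (hg : HasDerivAt g d (‖u‖ ^ 2)) :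
    HasFDerivAt (fun v : F => g (‖v‖ ^ 2)) ((2 * d) • innerSL ℝ u) u := by
  refine (hg.comp_hasFDerivAt u (hasStrictFDerivAt_norm_sq u).hasFDerivAt).congr_fderiv ?_
  ext v
  simp only [smul_apply, innerSL_apply_apply, nsmul_eq_mul, Nat.cast_ofNat, smul_eq_mul]
  ring

theorem fderiv_comp_norm_sq_apply (hg : ∀ y, HasDerivAt g (g' y) y) (u w : F) :
    fderiv ℝ (fun v : F => g (‖v‖ ^ 2)) u w = 2 * g' (‖u‖ ^ 2) * ⟪u, w⟫ := by
  simp [(hasFDerivAt_comp_norm_sq (hg _)).fderiv]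

theorem hasFDerivAt_fderiv_comp_norm_sq_apply {d : ℝ} (hg : ∀ y, HasDerivAt g (g' y) y) {u : F}
    (hg' : HasDerivAt g' d (‖u‖ ^ 2)) (w : F) :
    HasFDerivAt (fun v : F => fderiv ℝ (fun v : F => g (‖v‖ ^ 2)) v w)
      ((4 * d * ⟪u, w⟫) • innerSL ℝ u + (2 * g' (‖u‖ ^ 2)) • innerSL ℝ w) u := by
  have hfun : (fun v : F => fderiv ℝ (fun v : F => g (‖v‖ ^ 2)) v w)
      = fun v => 2 * g' (‖v‖ ^ 2) * innerSL ℝ w v :=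
    funext fun v => by rw [fderiv_comp_norm_sq_apply hg, innerSL_apply_apply, real_inner_comm]
  rw [hfun]
  refine (((hasFDerivAt_comp_norm_sq hg').const_mul 2).mul
    (innerSL ℝ w).hasFDerivAt).congr_fderiv ?_
  ext v
  simp only [add_apply, smul_apply, innerSL_apply_apply, smul_eq_mul, real_inner_comm w u]
  ring

theorem differentiableAt_besselJ_zero_mul_norm (c : ℝ) (u : F) :
    DifferentiableAt ℝ (fun v : F => besselJ 0 (c * ‖v‖)) u := by
  simp only [besselJ_zero_eq_besselSeries, mul_pow]
  exact (hasFDerivAt_comp_norm_sq (hasDerivAt_besselSeries_const_mul 0 _ _)).differentiableAt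

theorem hasFDerivAt_fderiv_besselJ_zero_mul_norm_apply (c : ℝ) (u w : F) :
    HasFDerivAt (fun v => fderiv ℝ (fun v : F => besselJ 0 (c * ‖v‖)) v w)
      ((c ^ 4 / 4 * besselSeries 2 (c ^ 2 * ‖u‖ ^ 2) * ⟪u, w⟫) • innerSL ℝ u
        - (c ^ 2 / 2 * besselSeries 1 (c ^ 2 * ‖u‖ ^ 2)) • innerSL ℝ w) u := by
  simp only [besselJ_zero_eq_besselSeries, mul_pow]
  refine (hasFDerivAt_fderiv_comp_norm_sq_apply (hasDerivAt_besselSeries_const_mul 0 (c ^ 2))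
    ((hasDerivAt_besselSeries_const_mul 1 (c ^ 2) _).const_mul _) w).congr_fderiv ?_
  ext v
  simp only [add_apply, sub_apply, smul_apply, innerSL_apply_apply, smul_eq_mul]
  ring

theorem fderiv_fderiv_besselJ_zero_mul_norm_apply_self (c : ℝ) (u : F) {w : F} (hw : ‖w‖ = 1) :
    fderiv ℝ (fun v => fderiv ℝ (fun v : F => besselJ 0 (c * ‖v‖)) v w) u w =
      -(c ^ 2 / 2) *
        (besselJ 0 (c * ‖u‖) + (1 - 2 * ⟪u, w⟫ ^ 2 / ‖u‖ ^ 2) * besselJ 2 (c * ‖u‖)) := by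
  have hrec : besselSeries 1 (c ^ 2 * ‖u‖ ^ 2) = besselSeries 0 (c ^ 2 * ‖u‖ ^ 2)
      + c ^ 2 * ‖u‖ ^ 2 / 4 * besselSeries 2 (c ^ 2 * ‖u‖ ^ 2) := by
    simpa using succ_mul_besselSeries_succ 0 (c ^ 2 * ‖u‖ ^ 2)
  -- Also true at `u = 0`, where `/ 0` is `0` and so is `⟪u, w⟫`.
  have hinner : ⟪u, w⟫ ^ 2 / ‖u‖ ^ 2 * ‖u‖ ^ 2 = ⟪u, w⟫ ^ 2 := div_mul_cancel_of_imp fun h => by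
    simp [norm_eq_zero.mp (pow_eq_zero_iff two_ne_zero |>.mp h)]
  rw [(hasFDerivAt_fderiv_besselJ_zero_mul_norm_apply c u w).fderiv, besselJ_zero_eq_besselSeries,
    besselJ_eq_mul_besselSeries, div_pow, mul_pow, hrec]
  simp only [sub_apply, smul_apply, innerSL_apply_apply, real_inner_self_eq_norm_sq, hw,
    smul_eq_mul]
  linear_combination (-(c ^ 4 / 4) * besselSeries 2 (c ^ 2 * ‖u‖ ^ 2)) * hinner

end Radial

theorem covKernel_pure_second_partials_general (E : ℝ) (hE : 0 < E)
    (u : EuclideanSpace ℝ (Fin 2)) :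
    DifferentiableAt ℝ (covKernel E) u ∧
    (∀ i : Fin 2, DifferentiableAt ℝ (covKernelPartial E i) u) ∧
    fderiv ℝ (covKernelPartial E 0) u (EuclideanSpace.single 0 1) =
      -(2 * Real.pi ^ 2 * E) *
        (besselJ 0 (2 * Real.pi * Real.sqrt E * ‖u‖) +
          (1 - 2 * (u 0) ^ 2 / ‖u‖ ^ 2) * besselJ 2 (2 * Real.pi * Real.sqrt E * ‖u‖)) ∧
    fderiv ℝ (covKernelPartial E 1) u (EuclideanSpace.single 1 1) =
      -(2 * Real.pi ^ 2 * E) *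
        (besselJ 0 (2 * Real.pi * Real.sqrt E * ‖u‖) +
          (1 - 2 * (u 1) ^ 2 / ‖u‖ ^ 2) * besselJ 2 (2 * Real.pi * Real.sqrt E * ‖u‖)) := by
  have hc : 2 * π ^ 2 * E = (2 * π * √E) ^ 2 / 2 := by
    rw [mul_pow, mul_pow, sq_sqrt hE.le]; ring
  have hsecond (i : Fin 2) : fderiv ℝ (covKernelPartial E i) u (EuclideanSpace.single i 1) =
      -(2 * π ^ 2 * E) * (besselJ 0 (2 * π * √E * ‖u‖) +
        (1 - 2 * (u i) ^ 2 / ‖u‖ ^ 2) * besselJ 2 (2 * π * √E * ‖u‖)) := by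
    have h := fderiv_fderiv_besselJ_zero_mul_norm_apply_self (2 * π * √E) u
      (w := EuclideanSpace.single i 1) (by simp)
    rw [EuclideanSpace.inner_single_right, one_mul, conj_trivial] at h
    rw [hc]
    exact h
  exact ⟨differentiableAt_besselJ_zero_mul_norm _ u,
    fun i => (hasFDerivAt_fderiv_besselJ_zero_mul_norm_apply _ u _).differentiableAt,
    hsecond 0, hsecond 1⟩

/-- For `E > 0`, `r^E(u) = J₀(2π√E ‖u‖)` is twice differentiable at every nonzero `u ∈ ℝ²`,
and its pure second partial derivatives satisfy
`∂²r^E/∂u_i²(u) = −2π²E (J₀(2π√E‖u‖) + (1 − 2u_i²/‖u‖²) J₂(2π√E‖u‖))` for `i = 1, 2`. -/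
theorem covKernel_pure_second_partials (E : ℝ) (hE : 0 < E)
    (u : EuclideanSpace ℝ (Fin 2)) (hu : u ≠ 0) :
    DifferentiableAt ℝ (covKernel E) u ∧
    (∀ i : Fin 2, DifferentiableAt ℝ (covKernelPartial E i) u) ∧
    fderiv ℝ (covKernelPartial E 0) u (EuclideanSpace.single 0 1) =
      -(2 * Real.pi ^ 2 * E) *
        (besselJ 0 (2 * Real.pi * Real.sqrt E * ‖u‖) +
          (1 - 2 * (u 0) ^ 2 / ‖u‖ ^ 2) * besselJ 2 (2 * Real.pi * Real.sqrt E * ‖u‖)) ∧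
    fderiv ℝ (covKernelPartial E 1) u (EuclideanSpace.single 1 1) =
      -(2 * Real.pi ^ 2 * E) *
        (besselJ 0 (2 * Real.pi * Real.sqrt E * ‖u‖) +
          (1 - 2 * (u 1) ^ 2 / ‖u‖ ^ 2) * besselJ 2 (2 * Real.pi * Real.sqrt E * ‖u‖)) :=
  covKernel_pure_second_partials_general E hE u
end
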